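/- arXiv:2103.11176 — 3 statements merged into one kernel-verified Lean document; each statement's English description precedes it below -/
import Mathlib

section
/- Let A be a real m×m matrix, N a real n×m matrix, P a real k×n matrix, W a symmetric invertible real n×n matrix such that S₀ := P W⁻¹ Pᵀ is invertible, and β ≠ 0 a real number. Define G = Nᵀ W⁻¹ Pᵀ S₀⁻¹ and H = A + (1/β) Nᵀ W⁻¹ N − (1/β) Nᵀ W⁻¹ Pᵀ S₀⁻¹ P W⁻¹ N. Then the 3×3 block matrix F̂ = [[A, Nᵀ, 0], [−N, βW, Pᵀ], [0, P, 0]] admits the block factorization F̂ = L · C · R, where L = [[I, (1/β) Nᵀ W⁻¹, G], [0, I, 0], [0, (1/β) P W⁻¹, I]], C = blockdiag(H, βW, −(1/β) S₀), and R = [[I, 0, 0], [−(1/β) W⁻¹ N, I, (1/β) W⁻¹ Pᵀ], [−Gᵀ, 0, I]]. -/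
/-!
`F̂` is a 2×2 block matrix `[[A, B], [-C, D]]` whose lower-right block `D = [[βW, Pᵀ], [P, 0]]`
is itself a saddle-point matrix. `D` has the LDU factorization through the Schur complement
`-(1/β) P W⁻¹ Pᵀ` of its invertible corner `βW`; plugging it into the unit-triangular elimination
of the outer block row and column leaves `H` as the outer Schur complement.
-/

open Matrix

theorem fromBlocks_one_mul_fromBlocks_diag_mul_fromBlocks_one {R : Type*} [Ring R]
    {l m n p q : Type*} [Fintype m] [Fintype n] [Fintype p] [DecidableEq m]
    (X : Matrix m n R) (L : Matrix l n R) (H : Matrix m m R) (D : Matrix n p R)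
    (Y : Matrix p m R) (U : Matrix p q R) :
    fromBlocks (1 : Matrix m m R) X 0 L * fromBlocks H 0 0 D *
        fromBlocks (1 : Matrix m m R) 0 Y U =
      fromBlocks (H + X * D * Y) (X * D * U) (L * D * Y) (L * D * U) := by
  simp [fromBlocks_multiply, Matrix.mul_assoc]

section

variable {𝕜 : Type*} [Field 𝕜] {m n k : Type*} [Fintype m] [Fintype n] [Fintype k]
  [DecidableEq m] [DecidableEq n] [DecidableEq k]

theorem fromBlocks_smul_zero_eq_of_isUnit_det (W : Matrix n n 𝕜) (Q : Matrix n k 𝕜)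
    (P : Matrix k n 𝕜) (hW : IsUnit W.det) {β : 𝕜} (hβ : β ≠ 0) :
    fromBlocks (β • W) Q P 0 =
      fromBlocks 1 0 ((1/β) • (P * W⁻¹)) 1 *
        fromBlocks (β • W) 0 0 (-((1/β) • (P * W⁻¹ * Q))) *
        fromBlocks 1 ((1/β) • (W⁻¹ * Q)) 0 1 := by
  have hβW : IsUnit (β • W).det := by
    rw [det_smul]
    exact ((Ne.isUnit hβ).pow _).mul hW
  have hinv : (β • W)⁻¹ = (1/β) • W⁻¹ :=
    inv_eq_left_inv (by simp [smul_smul, hβ, nonsing_inv_mul W hW])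
  let := (β • W).invertibleOfIsUnitDet hβW
  rw [fromBlocks_eq_of_invertible₁₁, invOf_eq_nonsing_inv, hinv]
  simp [Matrix.mul_smul, Matrix.smul_mul, Matrix.mul_assoc]

theorem fromBlocks_saddlePoint_eq_of_isUnit_det (A : Matrix m m 𝕜) (B : Matrix m n 𝕜)
    (C : Matrix n m 𝕜) (W : Matrix n n 𝕜) (Q : Matrix n k 𝕜) (P : Matrix k n 𝕜)
    (hW : IsUnit W.det) (hS : IsUnit (P * W⁻¹ * Q).det) {β : 𝕜} (hβ : β ≠ 0) :
    fromBlocks A (fromCols B 0) (fromRows (-C) 0) (fromBlocks (β • W) Q P 0) =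
      fromBlocks 1 (fromCols ((1/β) • (B * W⁻¹)) (B * W⁻¹ * Q * (P * W⁻¹ * Q)⁻¹)) 0
          (fromBlocks 1 0 ((1/β) • (P * W⁻¹)) 1) *
        fromBlocks (A + (1/β) • (B * W⁻¹ * C)
            - (1/β) • (B * W⁻¹ * Q * (P * W⁻¹ * Q)⁻¹ * (P * W⁻¹ * C))) 0 0
          (fromBlocks (β • W) 0 0 (-((1/β) • (P * W⁻¹ * Q)))) *
        fromBlocks 1 0 (fromRows (-((1/β) • (W⁻¹ * C))) (-((P * W⁻¹ * Q)⁻¹ * (P * W⁻¹ * C))))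
          (fromBlocks 1 ((1/β) • (W⁻¹ * Q)) 0 1) := by
  rw [fromBlocks_one_mul_fromBlocks_diag_mul_fromBlocks_one,
    ← fromBlocks_smul_zero_eq_of_isUnit_det W Q P hW hβ]
  set S := P * W⁻¹ * Q
  have hrow : fromCols ((1/β) • (B * W⁻¹)) (B * W⁻¹ * Q * S⁻¹) *
      fromBlocks (β • W) 0 0 (-((1/β) • S)) = fromCols B (-((1/β) • (B * W⁻¹ * Q))) := by
    simp [fromCols_mul_fromBlocks, smul_smul, hβ, Matrix.mul_assoc, nonsing_inv_mul W hW,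
      nonsing_inv_mul S hS]
  have hcol : fromBlocks (β • W) 0 0 (-((1/β) • S)) *
      fromRows (-((1/β) • (W⁻¹ * C))) (-(S⁻¹ * (P * W⁻¹ * C))) =
      fromRows (-C) ((1/β) • (P * W⁻¹ * C)) := by
    simp [fromBlocks_mul_fromRows, smul_smul, hβ, ← Matrix.mul_assoc, mul_nonsing_inv W hW,
      mul_nonsing_inv S hS]
  rw [hrow, Matrix.mul_assoc _ (fromBlocks (β • W) _ _ _), hcol]
  simp [fromCols_mul_fromRows, fromCols_mul_fromBlocks, fromBlocks_mul_fromRows, Matrix.mul_assoc]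

end

open Matrix in
/-- Schur-complement block factorization `F̂ = L · C · R` of the relaxed 3×3 block
Newtonian matrix `F̂ = [[A, Nᵀ, 0], [-N, βW, Pᵀ], [0, P, 0]]`, where
`H = A + (1/β) Nᵀ W⁻¹ N - (1/β) Nᵀ W⁻¹ Pᵀ S₀⁻¹ P W⁻¹ N` is the Schur complement of the
right-bottom 2×2 block and `G = Nᵀ W⁻¹ Pᵀ S₀⁻¹`, `S₀ = P W⁻¹ Pᵀ`. -/
theorem stmt_4 (m n k : ℕ)
    (A : Matrix (Fin m) (Fin m) ℝ)
    (N : Matrix (Fin n) (Fin m) ℝ)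
    (P : Matrix (Fin k) (Fin n) ℝ)
    (W : Matrix (Fin n) (Fin n) ℝ) (hWsymm : W.IsSymm) (hW : IsUnit W.det)
    (hS₀ : IsUnit (P * W⁻¹ * Pᵀ).det)
    (β : ℝ) (hβ : β ≠ 0) :
    (fromBlocks A (fromCols Nᵀ 0) (fromRows (-N) 0)
        (fromBlocks (β • W) Pᵀ P 0)) =
    (fromBlocks 1
        (fromCols ((1/β) • (Nᵀ * W⁻¹)) (Nᵀ * W⁻¹ * Pᵀ * (P * W⁻¹ * Pᵀ)⁻¹))
        0
        (fromBlocks 1 0 ((1/β) • (P * W⁻¹)) 1)) *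
    (fromBlocks (A + (1/β) • (Nᵀ * W⁻¹ * N)
          - (1/β) • (Nᵀ * W⁻¹ * Pᵀ * (P * W⁻¹ * Pᵀ)⁻¹ * (P * W⁻¹ * N)))
        0 0
        (fromBlocks (β • W) 0 0 (-((1/β) • (P * W⁻¹ * Pᵀ))))) *
    (fromBlocks 1 0
        (fromRows (-((1/β) • (W⁻¹ * N))) (-((Nᵀ * W⁻¹ * Pᵀ * (P * W⁻¹ * Pᵀ)⁻¹)ᵀ)))
        (fromBlocks 1 ((1/β) • (W⁻¹ * Pᵀ)) 0 1)) := by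
  have hGt : (Nᵀ * W⁻¹ * Pᵀ * (P * W⁻¹ * Pᵀ)⁻¹)ᵀ = (P * W⁻¹ * Pᵀ)⁻¹ * (P * W⁻¹ * N) := by
    simp [transpose_nonsing_inv, hWsymm.eq, Matrix.mul_assoc]
  rw [hGt]
  exact fromBlocks_saddlePoint_eq_of_isUnit_det A Nᵀ N W Pᵀ P hW hS₀ hβ
end

section
/- Let W be a real n×n diagonal matrix with nonzero diagonal entries, 𝒜 ⊆ {1, …, n} with selection matrix P (rows of the identity indexed by 𝒜) and complementary diagonal 0/1 indicator matrix Π_ℐ ((Π_ℐ)_{jj} = 1 iff j ∉ 𝒜). Then for every real m×m matrix A, every real n×m matrix N, and every real β ≠ 0, one has A + (1/β) Nᵀ W⁻¹ N − (1/β) Nᵀ W⁻¹ Pᵀ (P W⁻¹ Pᵀ)⁻¹ P W⁻¹ N = A + (1/β) Nᵀ Π_ℐ W⁻¹ Π_ℐ N. -/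
/-!
Since `P` picks the rows indexed by `𝒜`, `P W⁻¹ Pᵀ` is the diagonal block of `W⁻¹` on `𝒜`, and
inverting it gives the block of `W`. Hence `W⁻¹ Pᵀ (P W⁻¹ Pᵀ)⁻¹ P W⁻¹ = Pᵀ P W⁻¹` is the part of
`W⁻¹` supported on `𝒜`, and subtracting it from `W⁻¹` leaves the part on the complement,
which is `Π_ℐ W⁻¹ Π_ℐ`.
-/

open Matrix

variable {ι : Type*} [Fintype ι] [DecidableEq ι]

def selectionMatrix (R : Type*) [Zero R] [One R] (s : Set ι) : Matrix s ι R :=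
  (1 : Matrix ι ι R).submatrix (↑) id

section Selection

variable {R : Type*} [Semiring R] (s : Set ι)

omit [Fintype ι] in
theorem selectionMatrix_apply (a : s) (j : ι) :
    selectionMatrix R s a j = if (a : ι) = j then 1 else 0 := by
  simp [selectionMatrix, one_apply]

theorem selectionMatrix_mul {κ : Type*} (M : Matrix ι κ R) :
    selectionMatrix R s * M = M.submatrix (↑) id :=
  one_submatrix_mul _ (Equiv.refl ι) M

theorem mul_transpose_selectionMatrix {κ : Type*} (M : Matrix κ ι R) :
    M * (selectionMatrix R s)ᵀ = M.submatrix id (↑) := by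
  rw [selectionMatrix, transpose_submatrix, transpose_one]
  exact mul_submatrix_one (Equiv.refl ι) _ M

theorem selectionMatrix_mul_diagonal_mul_transpose [DecidablePred (· ∈ s)] (d : ι → R) :
    selectionMatrix R s * diagonal d * (selectionMatrix R s)ᵀ = diagonal fun a : s => d a := by
  rw [selectionMatrix_mul, mul_transpose_selectionMatrix, submatrix_submatrix]
  exact submatrix_diagonal d _ Subtype.val_injective

theorem transpose_selectionMatrix_mul_selectionMatrix [DecidablePred (· ∈ s)] :
    (selectionMatrix R s)ᵀ * selectionMatrix R s = diagonal fun j => if j ∈ s then 1 else 0 := by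
  ext i j
  simp only [mul_apply, transpose_apply, selectionMatrix_apply, ite_mul, one_mul, zero_mul]
  rw [Finset.sum_set_coe (f := fun x => if x = i then if x = j then (1 : R) else 0 else 0)]
  simp only [Finset.sum_ite_eq', Set.mem_toFinset, diagonal_apply]
  by_cases hij : i = j <;> simp [hij]

theorem transpose_selectionMatrix_mul_diagonal [DecidablePred (· ∈ s)] (d : ι → R) :
    (selectionMatrix R s)ᵀ * diagonal (fun a : s => d a) = diagonal d * (selectionMatrix R s)ᵀ := by
  ext i a
  by_cases h : (a : ι) = i <;> simp [selectionMatrix_apply, h]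

end Selection

theorem diagonal_sub_diagonal_ite {R : Type*} [Ring R] (s : Set ι) [DecidablePred (· ∈ s)]
    (d : ι → R) :
    diagonal d - diagonal (fun j => if j ∈ s then d j else 0)
      = diagonal (fun j => if j ∈ s then 0 else 1) * diagonal d
        * diagonal (fun j => if j ∈ s then 0 else 1) := by
  rw [diagonal_mul_diagonal, diagonal_mul_diagonal, diagonal_sub]
  congr 1; funext j
  by_cases hj : j ∈ s <;> simp [hj]

section Field

variable {K : Type*} [Field K]

theorem inv_diagonal_of_ne_zero {κ : Type*} [Fintype κ] [DecidableEq κ] {d : κ → K}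
    (hd : ∀ i, d i ≠ 0) : (diagonal d)⁻¹ = diagonal fun i => (d i)⁻¹ :=
  inv_eq_right_inv <| by simp [hd]

theorem diagonal_mul_transpose_selectionMatrix_mul_inv_mul (s : Set ι) [DecidablePred (· ∈ s)]
    {d : ι → K} (hd : ∀ i ∈ s, d i ≠ 0) :
    diagonal d * (selectionMatrix K s)ᵀ
        * (selectionMatrix K s * diagonal d * (selectionMatrix K s)ᵀ)⁻¹
        * (selectionMatrix K s * diagonal d)
      = diagonal fun j => if j ∈ s then d j else 0 := by
  set P := selectionMatrix K s
  calc diagonal d * Pᵀ * (P * diagonal d * Pᵀ)⁻¹ * (P * diagonal d)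
      = diagonal d * (Pᵀ * diagonal fun a : s => (d a)⁻¹) * P * diagonal d := by
        rw [selectionMatrix_mul_diagonal_mul_transpose,
          inv_diagonal_of_ne_zero fun a : s => hd a a.2]
        simp only [Matrix.mul_assoc]
    _ = diagonal d * diagonal (fun j => (d j)⁻¹) * (Pᵀ * P) * diagonal d := by
        have hcomm : Pᵀ * diagonal (fun a : s => (d a)⁻¹) = diagonal (fun j => (d j)⁻¹) * Pᵀ :=
          transpose_selectionMatrix_mul_diagonal s fun j => (d j)⁻¹
        rw [hcomm]
        simp only [Matrix.mul_assoc]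
    _ = diagonal fun j => if j ∈ s then d j else 0 := by
        rw [transpose_selectionMatrix_mul_selectionMatrix, diagonal_mul_diagonal,
          diagonal_mul_diagonal, diagonal_mul_diagonal]
        congr 1; funext j
        by_cases hj : j ∈ s <;> simp [hj, hd j]

theorem mul_diagonal_mul_sub_selectionMatrix_correction {κ μ : Type*}
    (s : Set ι) [DecidablePred (· ∈ s)] {d : ι → K} (hd : ∀ i ∈ s, d i ≠ 0)
    (M : Matrix μ ι K) (N : Matrix ι κ K) :
    M * diagonal d * N - M * diagonal d * (selectionMatrix K s)ᵀ
        * (selectionMatrix K s * diagonal d * (selectionMatrix K s)ᵀ)⁻¹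
        * (selectionMatrix K s * diagonal d * N)
      = M * diagonal (fun j => if j ∈ s then (0 : K) else 1) * diagonal d
        * diagonal (fun j => if j ∈ s then (0 : K) else 1) * N := by
  calc _ = M * (diagonal d - diagonal d * (selectionMatrix K s)ᵀ
          * (selectionMatrix K s * diagonal d * (selectionMatrix K s)ᵀ)⁻¹
          * (selectionMatrix K s * diagonal d)) * N := by
        simp only [Matrix.mul_sub, Matrix.sub_mul, Matrix.mul_assoc]
    _ = _ := by
        rw [diagonal_mul_transpose_selectionMatrix_mul_inv_mul s hd, diagonal_sub_diagonal_ite]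
        simp only [Matrix.mul_assoc]

end Field

open Matrix in
theorem stmt_6_general (n : ℕ) (w : Fin n → ℝ) (hw : ∀ i, w i ≠ 0)
    (𝒜 : Set (Fin n)) [DecidablePred (· ∈ 𝒜)]
    (P : Matrix 𝒜 (Fin n) ℝ) (hP : ∀ (a : 𝒜) (j : Fin n), P a j = if (a : Fin n) = j then 1 else 0)
    (PiI : Matrix (Fin n) (Fin n) ℝ)
    (hPiI : PiI = Matrix.diagonal (fun j => if j ∈ 𝒜 then 0 else 1))
    (m : ℕ) (A : Matrix (Fin m) (Fin m) ℝ) (N : Matrix (Fin n) (Fin m) ℝ)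
    (β : ℝ) :
    A + (1/β) • (Nᵀ * (Matrix.diagonal w)⁻¹ * N)
      - (1/β) • (Nᵀ * (Matrix.diagonal w)⁻¹ * Pᵀ * (P * (Matrix.diagonal w)⁻¹ * Pᵀ)⁻¹
          * (P * (Matrix.diagonal w)⁻¹ * N))
    = A + (1/β) • (Nᵀ * PiI * (Matrix.diagonal w)⁻¹ * PiI * N) := by
  obtain rfl : P = selectionMatrix ℝ 𝒜 := by
    ext a j
    rw [hP, selectionMatrix_apply]
  rw [hPiI, inv_diagonal_of_ne_zero hw, add_sub_assoc, ← smul_sub,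
    mul_diagonal_mul_sub_selectionMatrix_correction 𝒜 fun i _ => inv_ne_zero (hw i)]

open Matrix in
/-- Simplification of the Schur complement: for a diagonal `W` with nonzero diagonal
entries, selection matrix `P` of an index set `𝒜` and diagonal 0/1 indicator `Π_ℐ` of the
complementary indices, one has
`A + (1/β) Nᵀ W⁻¹ N - (1/β) Nᵀ W⁻¹ Pᵀ (P W⁻¹ Pᵀ)⁻¹ P W⁻¹ N = A + (1/β) Nᵀ Π_ℐ W⁻¹ Π_ℐ N`. -/
theorem stmt_6 (n : ℕ) (w : Fin n → ℝ) (hw : ∀ i, w i ≠ 0)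
    (𝒜 : Set (Fin n)) [DecidablePred (· ∈ 𝒜)]
    (P : Matrix 𝒜 (Fin n) ℝ) (hP : ∀ (a : 𝒜) (j : Fin n), P a j = if (a : Fin n) = j then 1 else 0)
    (PiI : Matrix (Fin n) (Fin n) ℝ)
    (hPiI : PiI = Matrix.diagonal (fun j => if j ∈ 𝒜 then 0 else 1))
    (m : ℕ) (A : Matrix (Fin m) (Fin m) ℝ) (N : Matrix (Fin n) (Fin m) ℝ)
    (β : ℝ) (hβ : β ≠ 0) :
    A + (1/β) • (Nᵀ * (Matrix.diagonal w)⁻¹ * N)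
      - (1/β) • (Nᵀ * (Matrix.diagonal w)⁻¹ * Pᵀ * (P * (Matrix.diagonal w)⁻¹ * Pᵀ)⁻¹
          * (P * (Matrix.diagonal w)⁻¹ * N))
    = A + (1/β) • (Nᵀ * PiI * (Matrix.diagonal w)⁻¹ * PiI * N) :=
  stmt_6_general n w hw 𝒜 P hP PiI hPiI m A N β
end

section
/- Let A₁, …, A_N be symmetric real n×n matrices and for q ∈ ℝᴺ set A(q) = Σ_{i=1}^{N} qᵢ Aᵢ. Let S ⊆ ℝᴺ be a convex set such that A(q) is positive definite for every q ∈ S, and fix f, v ∈ ℝⁿ. Define U(q) = A(q)⁻¹ f and J(q) = (1/2) (U(q) − v)ᵀ A(q) (U(q) − v) for q ∈ S. Then J is convex on S: for all q, q' ∈ S and t ∈ [0, 1], J(t q + (1 − t) q') ≤ t J(q) + (1 − t) J(q'). -/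
/-!
Expanding the quadratic form, `J(q) = ½ fᵀA(q)⁻¹f - fᵀv + ½ vᵀA(q)v` on `S`. The last term is
linear in `q`, and `B ↦ fᵀB⁻¹f` is convex on positive definite matrices: it is the supremum over
`u` of the affine functions `2 fᵀu - uᵀBu`, attained at `u = B⁻¹f`. As `q ↦ A(q)` is linear,
`J` is convex on `S`.
-/

open Matrix

/-- The stiffness matrix `A(q) = ∑ i, qᵢ • Aᵢ` depending linearly on `q`. -/
def stiff {n N : ℕ} (A : Fin N → Matrix (Fin n) (Fin n) ℝ) (q : Fin N → ℝ) :
    Matrix (Fin n) (Fin n) ℝ :=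
  ∑ i, q i • A i

/-- The discrete data-fidelity functional
`J(q) = (1/2) (U(q) - v)ᵀ A(q) (U(q) - v)` with `U(q) = A(q)⁻¹ f`. -/
noncomputable def fidelity {n N : ℕ} (A : Fin N → Matrix (Fin n) (Fin n) ℝ)
    (f v : Fin n → ℝ) (q : Fin N → ℝ) : ℝ :=
  (1/2 : ℝ) * (((stiff A q)⁻¹.mulVec f - v) ⬝ᵥ (stiff A q).mulVec ((stiff A q)⁻¹.mulVec f - v))

namespace Matrix

variable {n : Type*}

theorem convex_setOf_posDef : Convex ℝ {B : Matrix n n ℝ | B.PosDef} := by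
  intro B hB B' hB' a b ha hb hab
  rcases ha.lt_or_eq with ha | rfl
  · exact (hB.smul ha).add_posSemidef (hB'.posSemidef.smul hb)
  · rw [zero_add] at hab
    rwa [hab, zero_smul, zero_add, one_smul]

variable [Fintype n]

theorem IsSymm.dotProduct_mulVec_comm {B : Matrix n n ℝ} (hB : B.IsSymm) (u w : n → ℝ) :
    u ⬝ᵥ B *ᵥ w = w ⬝ᵥ B *ᵥ u := by
  rw [dotProduct_mulVec, ← mulVec_transpose, hB.eq, dotProduct_comm]

variable [DecidableEq n]

theorem mulVec_inv_mulVec {B : Matrix n n ℝ} (hB : IsUnit B.det) (f : n → ℝ) :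
    B *ᵥ (B⁻¹ *ᵥ f) = f := by
  rw [mulVec_mulVec, mul_nonsing_inv B hB, one_mulVec]

theorem PosDef.two_mul_dotProduct_sub_le_dotProduct_inv_mulVec {B : Matrix n n ℝ}
    (hB : B.PosDef) (f u : n → ℝ) :
    2 * (f ⬝ᵥ u) - u ⬝ᵥ B *ᵥ u ≤ f ⬝ᵥ B⁻¹ *ᵥ f := by
  have hBf := mulVec_inv_mulVec (isUnit_iff_isUnit_det B |>.1 hB.isUnit) f
  have hsymm := isHermitian_iff_isSymm.1 hB.isHermitian
  have hnonneg := hB.posSemidef.dotProduct_mulVec_nonneg (u - B⁻¹ *ᵥ f)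
  simp only [star_trivial, mulVec_sub, hBf, sub_dotProduct, dotProduct_sub] at hnonneg
  rw [hsymm.dotProduct_mulVec_comm (B⁻¹ *ᵥ f) u, hBf, dotProduct_comm u f,
    dotProduct_comm (B⁻¹ *ᵥ f) f] at hnonneg
  linarith

theorem convexOn_dotProduct_inv_mulVec (f : n → ℝ) :
    ConvexOn ℝ {B : Matrix n n ℝ | B.PosDef} (fun B => f ⬝ᵥ B⁻¹ *ᵥ f) := by
  refine ⟨convex_setOf_posDef, fun B hB B' hB' a b ha hb hab => ?_⟩
  set M := a • B + b • B'
  have hM : M.PosDef := convex_setOf_posDef hB hB' ha hb hab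
  set u := M⁻¹ *ᵥ f
  have hMu : u ⬝ᵥ M *ᵥ u = f ⬝ᵥ u := by
    rw [mulVec_inv_mulVec (isUnit_iff_isUnit_det M |>.1 hM.isUnit), dotProduct_comm]
  have hsplit : u ⬝ᵥ M *ᵥ u = a * (u ⬝ᵥ B *ᵥ u) + b * (u ⬝ᵥ B' *ᵥ u) := by
    simp only [M, add_mulVec, smul_mulVec, dotProduct_add, dotProduct_smul, smul_eq_mul]
  have h := hB.two_mul_dotProduct_sub_le_dotProduct_inv_mulVec f u
  have h' := hB'.two_mul_dotProduct_sub_le_dotProduct_inv_mulVec f u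
  calc f ⬝ᵥ u = a * (2 * (f ⬝ᵥ u) - u ⬝ᵥ B *ᵥ u)
        + b * (2 * (f ⬝ᵥ u) - u ⬝ᵥ B' *ᵥ u) := by
        linear_combination hMu - hsplit - 2 * (f ⬝ᵥ u) * hab
    _ ≤ a • (f ⬝ᵥ B⁻¹ *ᵥ f) + b • (f ⬝ᵥ B'⁻¹ *ᵥ f) := by
        simp only [smul_eq_mul]; gcongr

theorem IsSymm.dotProduct_mulVec_inv_mulVec_sub {B : Matrix n n ℝ} (hBs : B.IsSymm)
    (hB : IsUnit B.det) (f v : n → ℝ) :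
    (B⁻¹ *ᵥ f - v) ⬝ᵥ B *ᵥ (B⁻¹ *ᵥ f - v)
      = f ⬝ᵥ B⁻¹ *ᵥ f - 2 * (f ⬝ᵥ v) + v ⬝ᵥ B *ᵥ v := by
  rw [mulVec_sub, mulVec_inv_mulVec hB, sub_dotProduct, dotProduct_sub, dotProduct_sub,
    hBs.dotProduct_mulVec_comm _ v, mulVec_inv_mulVec hB, dotProduct_comm (B⁻¹ *ᵥ f) f,
    dotProduct_comm v f]
  ring

theorem convexOn_dotProduct_mulVec_inv_mulVec_sub (f v : n → ℝ) :
    ConvexOn ℝ {B : Matrix n n ℝ | B.PosDef}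
      (fun B => (B⁻¹ *ᵥ f - v) ⬝ᵥ B *ᵥ (B⁻¹ *ᵥ f - v)) := by
  let quadForm : Matrix n n ℝ →ₗ[ℝ] ℝ :=
    { toFun := fun B => v ⬝ᵥ B *ᵥ v
      map_add' := by simp [add_mulVec]
      map_smul' := by simp [smul_mulVec] }
  refine (((convexOn_dotProduct_inv_mulVec f).add_const (-2 * (f ⬝ᵥ v))).add
    (quadForm.convexOn convex_setOf_posDef)).congr fun B hB => ?_
  rw [(isHermitian_iff_isSymm.1 hB.isHermitian).dotProduct_mulVec_inv_mulVec_sub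
    (isUnit_iff_isUnit_det B |>.1 hB.isUnit)]
  simp only [neg_mul, LinearMap.coe_mk, AddHom.coe_mk, Pi.add_apply, add_left_inj, quadForm]
  ring

end Matrix

theorem stiff_eq_linearCombination {n N : ℕ} (A : Fin N → Matrix (Fin n) (Fin n) ℝ) :
    stiff A = Fintype.linearCombination ℝ A := by
  ext1 q
  rw [Fintype.linearCombination_apply, stiff]

theorem convexOn_fidelity {n N : ℕ} (A : Fin N → Matrix (Fin n) (Fin n) ℝ)
    {S : Set (Fin N → ℝ)} (hS : Convex ℝ S) (hpos : ∀ q ∈ S, (stiff A q).PosDef)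
    (f v : Fin n → ℝ) : ConvexOn ℝ S (fidelity A f v) := by
  rw [stiff_eq_linearCombination] at hpos
  have h := ((convexOn_dotProduct_mulVec_inv_mulVec_sub f v).comp_linearMap
    (Fintype.linearCombination ℝ A)).subset hpos hS |>.smul (c := 1 / 2) (by norm_num)
  refine h.congr fun q _ => ?_
  rw [fidelity, stiff_eq_linearCombination]
  rfl

theorem stmt_11_general (n N : ℕ) (A : Fin N → Matrix (Fin n) (Fin n) ℝ)
    (S : Set (Fin N → ℝ)) (hS : Convex ℝ S)
    (hpos : ∀ q ∈ S, (stiff A q).PosDef)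
    (f v : Fin n → ℝ) :
    ∀ q ∈ S, ∀ q' ∈ S, ∀ t ∈ Set.Icc (0 : ℝ) 1,
      fidelity A f v (t • q + (1 - t) • q')
        ≤ t * fidelity A f v q + (1 - t) * fidelity A f v q' :=
  fun _ hq _ hq' t ht =>
    (convexOn_fidelity A hS hpos f v).2 hq hq' ht.1 (sub_nonneg.2 ht.2) (add_sub_cancel t 1)

/-- Convexity of the data-fidelity functional `J(q) = (1/2)(U(q)-v)ᵀ A(q) (U(q)-v)` on a
convex set `S` where `A(q)` is positive definite, for symmetric matrices `A₁, …, A_N`. -/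
theorem stmt_11 (n N : ℕ) (A : Fin N → Matrix (Fin n) (Fin n) ℝ)
    (hsymm : ∀ i, (A i).IsSymm)
    (S : Set (Fin N → ℝ)) (hS : Convex ℝ S)
    (hpos : ∀ q ∈ S, (stiff A q).PosDef)
    (f v : Fin n → ℝ) :
    ∀ q ∈ S, ∀ q' ∈ S, ∀ t ∈ Set.Icc (0 : ℝ) 1,
      fidelity A f v (t • q + (1 - t) • q')
        ≤ t * fidelity A f v q + (1 - t) * fidelity A f v q' :=
  stmt_11_general n N A S hS hpos f v
end
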